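/- Let τ ∈ S_n have runs of lengths ρ_r, ..., ρ_1, ρ_0 and schedule numbers (w_i). For 1 ≤ l ≤ r, the product of q-integers of the l-schedule numbers satisfies Π_{c=1}^{n} [w^{(l)}(c)]_q = ([ρ_l]_q / [ρ_0]_q) · Π_{i=1}^{n} [w_i]_q in the field of rational functions ℚ(q); equivalently [ρ_0]_q · Π_c [w^{(l)}(c)]_q = [ρ_l]_q · Π_i [w_i]_q in ℤ[q]. -/

import Mathlib

/-- Positions (1-indexed, in the one-line notation of a permutation of `{1,…,n}`)
of the `(k+1)`-st-from-last increasing run, where the runs have lengths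
`ρ r, …, ρ 1, ρ 0` from left to right (so run `k = 0` is the last run). -/
def runPos (n : ℕ) (ρ : ℕ → ℕ) (k : ℕ) : Finset ℕ :=
  Finset.Icc (n + 1 - ∑ j ∈ Finset.range (k + 1), ρ j) (n - ∑ j ∈ Finset.range k, ρ j)

/-- The run index (counted from the last run, `0` = last run) of position `p`. -/
def runIdxOf (n r : ℕ) (ρ : ℕ → ℕ) (p : ℕ) : ℕ :=
  ((Finset.range (r + 1)).filter (fun m => ∑ j ∈ Finset.range (m + 1), ρ j ≤ n - p)).card

/-- The `l`-schedule number `w^{(l)}(c)` of the value `c` for a permutation whose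
one-line notation is `τ` (position `p` holds value `τ p`), with inverse `τinv`,
and run lengths `ρ r, …, ρ 0`. If `c` lies in one of the last `l` runs it is
`#(elements < c in c's run) + #(elements > c in the previous run)`; if `c` lies in
the `(l+1)`-st from last run it is the number of elements weakly to the right of `c`
in that run; otherwise it is
`#(elements > c in c's run) + #(elements < c in the next run)`. -/
def sched (n r : ℕ) (ρ τ τinv : ℕ → ℕ) (l c : ℕ) : ℕ :=
  let p := τinv c
  let k := runIdxOf n r ρ p
  if k < l then
    ((runPos n ρ k).filter (fun p' => τ p' < c)).card
      + ((runPos n ρ (k + 1)).filter (fun p' => c < τ p')).card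
  else if k = l then
    ((runPos n ρ k).filter (fun p' => p ≤ p')).card
  else
    ((runPos n ρ k).filter (fun p' => c < τ p')).card
      + ((runPos n ρ (k - 1)).filter (fun p' => τ p' < c)).card

/-! The identity already holds for multisets: the `l`-schedule numbers together with `ρ 0` form
the same multiset as the `0`-schedule numbers together with `ρ l`; applying `m ↦ [m]_q` and
taking products gives the statement. Passing from `l` to `l + 1` changes only the numbers of runs
`l` and `l + 1`. Writing `A`, `B` for their value sets, run `l + 1` trades its numbers
`crossRank A B x` (`x ∈ B`) for the ranks `1, …, |B|`, and run `l` trades its ranks `1, …, |A|`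
for `crossRank A B x` (`x ∈ A`). So each step is the identity
`{crossRank A B x | x ∈ A} + {1, …, |B|} + {|A|} = {crossRank A B x | x ∈ B} + {1, …, |A|} + {|B|}`,
valid for any two disjoint finite subsets of a linear order, which is proved by removing the
largest element of `A ∪ B`; the steps telescope in the cancellative monoid of multisets. -/

open Finset

section CrossRank
variable {α : Type*} [LinearOrder α]

def crossRank (A B : Finset α) (x : α) : ℕ := #{a ∈ A | a < x} + #{b ∈ B | x < b}

lemma map_val_insert_of_notMem {β : Type*} {s : Finset α} {x : α} (hx : x ∉ s) (f : α → β) :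
    (insert x s).val.map f = f x ::ₘ s.val.map f := by
  rw [insert_val_of_notMem hx, Multiset.map_cons]

lemma range_succ_map_succ (k : ℕ) :
    (Multiset.range (k + 1)).map (· + 1) = 1 ::ₘ ((Multiset.range k).map (· + 1)).map (· + 1) := by
  simp [Multiset.range, List.range_succ_eq_map, Function.comp_def]

lemma map_crossRank_insert_left {A B s : Finset α} {m : α} (h : ∀ x ∈ s, x < m) :
    s.val.map (crossRank (insert m A) B) = s.val.map (crossRank A B) :=
  Multiset.map_congr rfl fun x hx => by simp [crossRank, filter_insert, (h x hx).not_gt]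

lemma map_crossRank_insert_right {A B s : Finset α} {m : α} (hm : m ∉ B) (h : ∀ x ∈ s, x < m) :
    s.val.map (crossRank A (insert m B)) = (s.val.map (crossRank A B)).map (· + 1) := by
  rw [Multiset.map_map]
  refine Multiset.map_congr rfl fun x hx => ?_
  have hm' : m ∉ {b ∈ B | x < b} := fun h' => hm (mem_filter.1 h').1
  simp [crossRank, filter_insert, h x hx, card_insert_of_notMem hm', add_assoc]

lemma crossRank_insert_left_self {A B : Finset α} {m : α} (h : ∀ x ∈ A ∪ B, x < m) :
    crossRank (insert m A) B m = #A := by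
  have hA : {a ∈ A | a < m} = A := filter_true_of_mem fun a ha => h a (mem_union_left _ ha)
  have hB : {b ∈ B | m < b} = ∅ :=
    filter_false_of_mem fun b hb => (h b (mem_union_right _ hb)).not_gt
  simp [crossRank, filter_insert, hA, hB]

lemma crossRank_insert_right_self {A B : Finset α} {m : α} (h : ∀ x ∈ A ∪ B, x < m) :
    crossRank A (insert m B) m = #A := by
  have hA : {a ∈ A | a < m} = A := filter_true_of_mem fun a ha => h a (mem_union_left _ ha)
  have hB : {b ∈ B | m < b} = ∅ :=
    filter_false_of_mem fun b hb => (h b (mem_union_right _ hb)).not_gt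
  simp [crossRank, filter_insert, hA, hB]

lemma map_crossRank_add_eq_insert_left {A B : Finset α} {m : α} (hmA : m ∉ A)
    (hlt : ∀ x ∈ A ∪ B, x < m)
    (ih : A.val.map (crossRank A B) + (Multiset.range #B).map (· + 1) + {#A}
      = B.val.map (crossRank A B) + (Multiset.range #A).map (· + 1) + {#B}) :
    (insert m A).val.map (crossRank (insert m A) B) + (Multiset.range #B).map (· + 1)
        + {#(insert m A)}
      = B.val.map (crossRank (insert m A) B) + (Multiset.range #(insert m A)).map (· + 1)
        + {#B} := by
  rw [map_val_insert_of_notMem hmA, crossRank_insert_left_self hlt,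
    map_crossRank_insert_left fun x hx => hlt x (mem_union_left _ hx),
    map_crossRank_insert_left fun x hx => hlt x (mem_union_right _ hx),
    card_insert_of_notMem hmA, Multiset.range_succ, Multiset.map_cons,
    ← Multiset.singleton_add, ← Multiset.singleton_add]
  convert congrArg (· + {#A + 1}) ih using 1 <;> ac_rfl

lemma map_crossRank_add_eq_insert_right {A B : Finset α} {m : α} (hmB : m ∉ B)
    (hlt : ∀ x ∈ A ∪ B, x < m)
    (ih : A.val.map (crossRank A B) + (Multiset.range #B).map (· + 1) + {#A}
      = B.val.map (crossRank A B) + (Multiset.range #A).map (· + 1) + {#B}) :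
    A.val.map (crossRank A (insert m B)) + (Multiset.range #(insert m B)).map (· + 1) + {#A}
      = (insert m B).val.map (crossRank A (insert m B)) + (Multiset.range #A).map (· + 1)
        + {#(insert m B)} := by
  have ih' := congrArg (Multiset.map (· + 1)) ih
  simp only [Multiset.map_add, Multiset.map_singleton] at ih'
  have hrange : (Multiset.range #A).map (· + 1) + {#A + 1}
      = 1 ::ₘ ((Multiset.range #A).map (· + 1)).map (· + 1) := by
    rw [← range_succ_map_succ, Multiset.range_succ, Multiset.map_cons, add_comm,
      Multiset.singleton_add]
  rw [map_val_insert_of_notMem hmB, crossRank_insert_right_self hlt,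
    map_crossRank_insert_right hmB fun x hx => hlt x (mem_union_left _ hx),
    map_crossRank_insert_right hmB fun x hx => hlt x (mem_union_right _ hx),
    card_insert_of_notMem hmB, range_succ_map_succ]
  apply add_right_cancel (b := {#A + 1})
  conv_rhs => rw [add_right_comm, add_assoc _ _ {#A + 1}, hrange]
  simp only [← Multiset.singleton_add]
  convert congrArg (· + {1} + {#A}) ih' using 1 <;> ac_rfl

theorem map_crossRank_add_eq {A B : Finset α} (hAB : Disjoint A B) :
    A.val.map (crossRank A B) + (Multiset.range #B).map (· + 1) + {#A}
      = B.val.map (crossRank A B) + (Multiset.range #A).map (· + 1) + {#B} := by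
  suffices key : ∀ s A B, Disjoint A B → A ∪ B = s →
      A.val.map (crossRank A B) + (Multiset.range #B).map (· + 1) + {#A}
        = B.val.map (crossRank A B) + (Multiset.range #A).map (· + 1) + {#B} from
    key _ A B hAB rfl
  intro s
  induction s using Finset.induction_on_max with
  | empty =>
    intro A B _ h
    obtain ⟨rfl, rfl⟩ := union_eq_empty.1 h
    rfl
  | insert m t ht ih =>
    intro A B hAB hs
    have hmt : m ∉ t := fun h => (ht m h).false
    rcases mem_union.1 (hs ▸ mem_insert_self m t : m ∈ A ∪ B) with hmA | hmB
    · have hs' : A.erase m ∪ B = t := by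
        rw [← erase_insert hmt, ← hs, erase_union_distrib,
          erase_eq_of_notMem (disjoint_left.1 hAB hmA)]
      rw [← insert_erase hmA]
      exact map_crossRank_add_eq_insert_left (notMem_erase m A) (hs' ▸ ht)
        (ih _ _ (hAB.mono_left (erase_subset m A)) hs')
    · have hs' : A ∪ B.erase m = t := by
        rw [← erase_insert hmt, ← hs, erase_union_distrib,
          erase_eq_of_notMem (disjoint_right.1 hAB hmB)]
      rw [← insert_erase hmB]
      exact map_crossRank_add_eq_insert_right (notMem_erase m B) (hs' ▸ ht)
        (ih _ _ (hAB.mono_right (erase_subset m B)) hs')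

theorem map_card_filter_le (s : Finset α) :
    s.val.map (fun x => #{y ∈ s | x ≤ y}) = (Multiset.range #s).map (· + 1) := by
  induction s using Finset.induction_on_min with
  | empty => rfl
  | insert a s ha ih =>
    have has : a ∉ s := fun h => (ha a h).false
    have htop : #{y ∈ insert a s | a ≤ y} = #s + 1 := by
      rw [filter_true_of_mem fun y hy => ?_, card_insert_of_notMem has]
      rcases mem_insert.1 hy with rfl | hy
      exacts [le_rfl, (ha y hy).le]
    rw [map_val_insert_of_notMem has, htop, card_insert_of_notMem has, Multiset.range_succ,
      Multiset.map_cons, ← ih]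
    congr 1
    exact Multiset.map_congr rfl fun x hx => by simp [filter_insert, (ha x hx).not_ge]

end CrossRank

section Runs
variable {n r : ℕ} {ρ : ℕ → ℕ}

lemma sum_range_le_sum_range (ρ : ℕ → ℕ) {i j : ℕ} (h : i ≤ j) :
    ∑ k ∈ range i, ρ k ≤ ∑ k ∈ range j, ρ k :=
  sum_le_sum_of_subset (range_subset_range.2 h)

variable (hsum : ∑ k ∈ range (r + 1), ρ k = n)
include hsum

lemma mem_runPos_iff {k : ℕ} (hk : k ≤ r) {p : ℕ} :
    p ∈ runPos n ρ k ↔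
      n + 1 ≤ p + ∑ j ∈ range (k + 1), ρ j ∧ p + ∑ j ∈ range k, ρ j ≤ n := by
  have hle := hsum ▸ sum_range_le_sum_range ρ (show k + 1 ≤ r + 1 by omega)
  have hsucc := sum_range_succ ρ k
  simp only [runPos, mem_Icc]
  omega

lemma runPos_subset_Icc {k : ℕ} (hk : k ≤ r) : runPos n ρ k ⊆ Icc 1 n := by
  intro p hp
  have hle := hsum ▸ sum_range_le_sum_range ρ (show k + 1 ≤ r + 1 by omega)
  rw [mem_runPos_iff hsum hk] at hp
  rw [mem_Icc]
  omega

lemma card_runPos {k : ℕ} (hk : k ≤ r) : #(runPos n ρ k) = ρ k := by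
  have hle := hsum ▸ sum_range_le_sum_range ρ (show k + 1 ≤ r + 1 by omega)
  have hsucc := sum_range_succ ρ k
  rw [runPos, Nat.card_Icc]
  omega

lemma runIdxOf_of_mem_runPos {k : ℕ} (hk : k ≤ r) {p : ℕ} (hp : p ∈ runPos n ρ k) :
    runIdxOf n r ρ p = k := by
  rw [mem_runPos_iff hsum hk] at hp
  have hfilter : {m ∈ range (r + 1) | ∑ j ∈ range (m + 1), ρ j ≤ n - p} = range k := by
    ext m
    simp only [mem_filter, mem_range]
    constructor
    · rintro ⟨-, hm⟩
      by_contra! hkm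
      have := sum_range_le_sum_range ρ (show k + 1 ≤ m + 1 by omega)
      omega
    · intro hm
      have := sum_range_le_sum_range ρ (show m + 1 ≤ k by omega)
      omega
  rw [runIdxOf, hfilter, card_range]

lemma pairwiseDisjoint_runPos : (range (r + 1) : Set ℕ).PairwiseDisjoint (runPos n ρ) :=
  fun k hk k' hk' hne => disjoint_left.2 fun p hp hp' =>
    hne ((runIdxOf_of_mem_runPos hsum (by simpa [Nat.lt_succ_iff] using hk) hp).symm.trans
      (runIdxOf_of_mem_runPos hsum (by simpa [Nat.lt_succ_iff] using hk') hp'))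

lemma biUnion_runPos : (range (r + 1)).biUnion (runPos n ρ) = Icc 1 n := by
  refine eq_of_subset_of_card_le
    (biUnion_subset.2 fun k hk => runPos_subset_Icc hsum (Nat.lt_succ_iff.1 (mem_range.1 hk))) ?_
  rw [card_biUnion (pairwiseDisjoint_runPos hsum),
    sum_congr rfl fun k hk => card_runPos hsum (Nat.lt_succ_iff.1 (mem_range.1 hk)), hsum,
    Nat.card_Icc, Nat.add_sub_cancel]

lemma map_Icc_eq_sum_map_runPos {β : Type*} (g : ℕ → β) :
    (Icc 1 n).val.map g = ∑ k ∈ range (r + 1), (runPos n ρ k).val.map g := by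
  rw [← biUnion_runPos hsum, ← disjiUnion_eq_biUnion _ _ (pairwiseDisjoint_runPos hsum),
    disjiUnion_val, Multiset.map_bind]
  rfl

end Runs

section Schedule

def schedNumbers (n r : ℕ) (ρ τ τinv : ℕ → ℕ) (L : ℕ) : Multiset ℕ :=
  (Icc 1 n).val.map (sched n r ρ τ τinv L)

def runSchedNumbers (n r : ℕ) (ρ τ τinv : ℕ → ℕ) (L k : ℕ) : Multiset ℕ :=
  (runPos n ρ k).val.map (fun p => sched n r ρ τ τinv L (τ p))

variable {n r : ℕ} {ρ τ τinv : ℕ → ℕ}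

variable (hsum : ∑ k ∈ range (r + 1), ρ k = n) (hτinv : Set.LeftInvOn τinv τ (Icc 1 n))
include hsum hτinv

lemma sched_apply_of_mem_runPos {k : ℕ} (hk : k ≤ r) {p : ℕ} (hp : p ∈ runPos n ρ k) (L : ℕ) :
    sched n r ρ τ τinv L (τ p) =
      if k < L then
        #{p' ∈ runPos n ρ k | τ p' < τ p} + #{p' ∈ runPos n ρ (k + 1) | τ p < τ p'}
      else if k = L then #{p' ∈ runPos n ρ k | p ≤ p'}
      else #{p' ∈ runPos n ρ k | τ p < τ p'} + #{p' ∈ runPos n ρ (k - 1) | τ p' < τ p} := by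
  simp only [sched, hτinv (runPos_subset_Icc hsum hk hp), runIdxOf_of_mem_runPos hsum hk hp]

lemma injOn_runPos {k : ℕ} (hk : k ≤ r) : Set.InjOn τ (runPos n ρ k) :=
  hτinv.injOn.mono (coe_subset.2 (runPos_subset_Icc hsum hk))

lemma card_image_runPos {k : ℕ} (hk : k ≤ r) : #((runPos n ρ k).image τ) = ρ k := by
  rw [card_image_of_injOn (injOn_runPos hsum hτinv hk), card_runPos hsum hk]

lemma disjoint_image_runPos {k k' : ℕ} (hk : k ≤ r) (hk' : k' ≤ r) (hne : k ≠ k') :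
    Disjoint ((runPos n ρ k).image τ) ((runPos n ρ k').image τ) := by
  refine disjoint_left.2 fun x hx hx' => ?_
  obtain ⟨p, hp, rfl⟩ := mem_image.1 hx
  obtain ⟨p', hp', hpp'⟩ := mem_image.1 hx'
  have := hτinv.injOn (runPos_subset_Icc hsum hk' hp') (runPos_subset_Icc hsum hk hp) hpp'
  exact disjoint_left.1 (pairwiseDisjoint_runPos hsum (by simpa [Nat.lt_succ_iff] using hk)
    (by simpa [Nat.lt_succ_iff] using hk') hne) hp (this ▸ hp')

lemma crossRank_image_runPos {k : ℕ} (hk : k + 1 ≤ r) (p : ℕ) :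
    crossRank ((runPos n ρ k).image τ) ((runPos n ρ (k + 1)).image τ) (τ p) =
      #{p' ∈ runPos n ρ k | τ p' < τ p} + #{p' ∈ runPos n ρ (k + 1) | τ p < τ p'} := by
  rw [crossRank, filter_image, filter_image,
    card_image_of_injOn ((injOn_runPos hsum hτinv (by omega)).mono (filter_subset _ _)),
    card_image_of_injOn ((injOn_runPos hsum hτinv hk).mono (filter_subset _ _))]

lemma runSchedNumbers_self {k : ℕ} (hk : k ≤ r) :
    runSchedNumbers n r ρ τ τinv k k = (Multiset.range (ρ k)).map (· + 1) := by
  rw [← card_runPos hsum hk, ← map_card_filter_le]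
  refine Multiset.map_congr rfl fun p hp => ?_
  rw [sched_apply_of_mem_runPos hsum hτinv hk hp, if_neg (lt_irrefl k), if_pos rfl]

lemma runSchedNumbers_succ_of_ne {l k : ℕ} (hk : k ≤ r) (hkl : k ≠ l) (hkl' : k ≠ l + 1) :
    runSchedNumbers n r ρ τ τinv (l + 1) k = runSchedNumbers n r ρ τ τinv l k := by
  refine Multiset.map_congr rfl fun p hp => ?_
  rw [sched_apply_of_mem_runPos hsum hτinv hk hp, sched_apply_of_mem_runPos hsum hτinv hk hp]
  by_cases hlt : k < l
  · rw [if_pos hlt, if_pos (by omega)]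
  · rw [if_neg hlt, if_neg (by omega), if_neg hkl, if_neg hkl']

lemma runSchedNumbers_succ_self {l : ℕ} (hl : l + 1 ≤ r) :
    runSchedNumbers n r ρ τ τinv (l + 1) l =
      ((runPos n ρ l).image τ).val.map
        (crossRank ((runPos n ρ l).image τ) ((runPos n ρ (l + 1)).image τ)) := by
  rw [image_val_of_injOn (injOn_runPos hsum hτinv (by omega)), Multiset.map_map]
  refine Multiset.map_congr rfl fun p hp => ?_
  rw [sched_apply_of_mem_runPos hsum hτinv (by omega) hp, if_pos (by omega), Function.comp_apply,
    crossRank_image_runPos hsum hτinv hl]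

lemma runSchedNumbers_self_succ {l : ℕ} (hl : l + 1 ≤ r) :
    runSchedNumbers n r ρ τ τinv l (l + 1) =
      ((runPos n ρ (l + 1)).image τ).val.map
        (crossRank ((runPos n ρ l).image τ) ((runPos n ρ (l + 1)).image τ)) := by
  rw [image_val_of_injOn (injOn_runPos hsum hτinv hl), Multiset.map_map]
  refine Multiset.map_congr rfl fun p hp => ?_
  rw [sched_apply_of_mem_runPos hsum hτinv hl hp, if_neg (by omega), if_neg (by omega),
    Nat.add_sub_cancel, add_comm, Function.comp_apply, crossRank_image_runPos hsum hτinv hl]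

variable (hτ : Set.MapsTo τ (Icc 1 n) (Icc 1 n))
include hτ

lemma schedNumbers_eq_sum (L : ℕ) :
    schedNumbers n r ρ τ τinv L = ∑ k ∈ range (r + 1), runSchedNumbers n r ρ τ τinv L k := by
  have himage : (Icc 1 n).image τ = Icc 1 n :=
    eq_of_subset_of_card_le (image_subset_iff.2 hτ) (card_image_of_injOn hτinv.injOn).ge
  rw [schedNumbers, ← himage, image_val_of_injOn hτinv.injOn, Multiset.map_map]
  exact map_Icc_eq_sum_map_runPos hsum _

theorem schedNumbers_succ_add_singleton {l : ℕ} (hl : l + 1 ≤ r) :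
    schedNumbers n r ρ τ τinv (l + 1) + {ρ l} = schedNumbers n r ρ τ τinv l + {ρ (l + 1)} := by
  set others := ((range (r + 1)).erase l).erase (l + 1)
  have hsplit : ∀ L, schedNumbers n r ρ τ τinv L =
      runSchedNumbers n r ρ τ τinv L l + runSchedNumbers n r ρ τ τinv L (l + 1)
        + ∑ k ∈ others, runSchedNumbers n r ρ τ τinv L k := by
    intro L
    rw [schedNumbers_eq_sum hsum hτinv hτ, ← add_sum_erase _ _ (mem_range.2 (by omega : l < r + 1)),
      ← add_sum_erase _ _ (mem_erase.2 ⟨by omega, mem_range.2 (by omega : l + 1 < r + 1)⟩),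
      add_assoc]
  have hothers : ∑ k ∈ others, runSchedNumbers n r ρ τ τinv (l + 1) k
      = ∑ k ∈ others, runSchedNumbers n r ρ τ τinv l k :=
    sum_congr rfl fun k hk => by
      simp only [others, mem_erase, mem_range] at hk
      exact runSchedNumbers_succ_of_ne hsum hτinv (by omega) hk.2.1 hk.1
  have hmerge := map_crossRank_add_eq (disjoint_image_runPos hsum hτinv (by omega) hl
    (by omega : l ≠ l + 1))
  rw [card_image_runPos hsum hτinv (k := l) (by omega), card_image_runPos hsum hτinv hl] at hmerge
  rw [hsplit, hsplit, hothers, runSchedNumbers_succ_self hsum hτinv hl,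
    runSchedNumbers_self_succ hsum hτinv hl, runSchedNumbers_self hsum hτinv (k := l) (by omega),
    runSchedNumbers_self hsum hτinv hl]
  convert congrArg (· + ∑ k ∈ others, runSchedNumbers n r ρ τ τinv l k) hmerge using 1 <;> ac_rfl

theorem schedNumbers_add_singleton_zero {l : ℕ} (hl : l ≤ r) :
    schedNumbers n r ρ τ τinv l + {ρ 0} = schedNumbers n r ρ τ τinv 0 + {ρ l} := by
  induction l with
  | zero => rfl
  | succ l ih =>
    apply add_right_cancel (b := ({ρ l} : Multiset ℕ))
    calc schedNumbers n r ρ τ τinv (l + 1) + {ρ 0} + {ρ l}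
        = schedNumbers n r ρ τ τinv (l + 1) + {ρ l} + {ρ 0} := add_right_comm _ _ _
      _ = schedNumbers n r ρ τ τinv l + {ρ 0} + {ρ (l + 1)} := by
        rw [schedNumbers_succ_add_singleton hsum hτinv hτ hl, add_right_comm]
      _ = schedNumbers n r ρ τ τinv 0 + {ρ (l + 1)} + {ρ l} := by
        rw [ih (by omega), add_right_comm]

end Schedule

theorem stmt_10_general (n r : ℕ) (ρ τ τinv : ℕ → ℕ) (l : ℕ) (hlr : l ≤ r)
    (hsum : ∑ k ∈ Finset.range (r + 1), ρ k = n)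
    (hτmem : ∀ p, 1 ≤ p → p ≤ n → τ p ∈ Finset.Icc 1 n)
    (hinv : ∀ p, 1 ≤ p → p ≤ n → τinv (τ p) = p)
    :
    (∑ i ∈ Finset.range (ρ 0), (Polynomial.X : Polynomial ℤ) ^ i)
        * ∏ c ∈ Finset.Icc 1 n,
            ∑ i ∈ Finset.range (sched n r ρ τ τinv l c), (Polynomial.X : Polynomial ℤ) ^ i
      = (∑ i ∈ Finset.range (ρ l), (Polynomial.X : Polynomial ℤ) ^ i)
          * ∏ c ∈ Finset.Icc 1 n,
              ∑ i ∈ Finset.range (sched n r ρ τ τinv 0 c), (Polynomial.X : Polynomial ℤ) ^ i := by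
  have hτ : Set.MapsTo τ (Icc 1 n) (Icc 1 n) := fun p hp =>
    hτmem p (mem_Icc.1 hp).1 (mem_Icc.1 hp).2
  have hτinv : Set.LeftInvOn τinv τ (Icc 1 n) := fun p hp =>
    hinv p (mem_Icc.1 hp).1 (mem_Icc.1 hp).2
  have key := congrArg
    (fun s => (s.map fun m => ∑ i ∈ range m, (Polynomial.X : Polynomial ℤ) ^ i).prod)
    (schedNumbers_add_singleton_zero hsum hτinv hτ hlr)
  simpa [schedNumbers, prod_map_val, mul_comm] using key

/-- For a permutation `τ ∈ S_n` with runs of lengths `ρ r, …, ρ 0`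
and `1 ≤ l ≤ r`, in `ℤ[q]`:
`[ρ 0]_q · Π_{c=1}^{n} [w^{(l)}(c)]_q = [ρ l]_q · Π_{c=1}^{n} [w^{(0)}(c)]_q`. -/
theorem stmt_10 (n r : ℕ) (ρ τ τinv : ℕ → ℕ) (l : ℕ) (hl : 1 ≤ l) (hlr : l ≤ r)
    (hρpos : ∀ k, k ≤ r → 0 < ρ k)
    (hsum : ∑ k ∈ Finset.range (r + 1), ρ k = n)
    (hτmem : ∀ p, 1 ≤ p → p ≤ n → τ p ∈ Finset.Icc 1 n)
    (hinv : ∀ p, 1 ≤ p → p ≤ n → τinv (τ p) = p)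
    (hinv' : ∀ c, 1 ≤ c → c ≤ n → τinv c ∈ Finset.Icc 1 n ∧ τ (τinv c) = c)
    (hincr : ∀ p, 1 ≤ p → p + 1 ≤ n →
        runIdxOf n r ρ p = runIdxOf n r ρ (p + 1) → τ p < τ (p + 1))
    (hdesc : ∀ p, 1 ≤ p → p + 1 ≤ n →
        runIdxOf n r ρ p ≠ runIdxOf n r ρ (p + 1) → τ (p + 1) < τ p)
    :
    (∑ i ∈ Finset.range (ρ 0), (Polynomial.X : Polynomial ℤ) ^ i)
        * ∏ c ∈ Finset.Icc 1 n,
            ∑ i ∈ Finset.range (sched n r ρ τ τinv l c), (Polynomial.X : Polynomial ℤ) ^ i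
      = (∑ i ∈ Finset.range (ρ l), (Polynomial.X : Polynomial ℤ) ^ i)
          * ∏ c ∈ Finset.Icc 1 n,
              ∑ i ∈ Finset.range (sched n r ρ τ τinv 0 c), (Polynomial.X : Polynomial ℤ) ^ i :=
  stmt_10_general n r ρ τ τinv l hlr hsum hτmem hinv
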